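/- arXiv:1812.09995 — 5 statements merged into one kernel-verified Lean document; each statement's English description precedes it below -/
import Mathlib

section
/- Let A be the unital subalgebra of M₃(ℂ) ⊕ M₃(ℂ) consisting of pairs of matrices (λI₃ + αE₁₂ + βE₁₃, λI₃ − βE₁₃ + αE₂₃) for λ, α, β ∈ ℂ. Then the C*-algebra generated by A inside M₃(ℂ) ⊕ M₃(ℂ) is all of M₃(ℂ) ⊕ M₃(ℂ). -/
/-!
Indexing matrix units from `0`, let `x = (E₀₁, E₁₂)` and `y = (E₀₂, -E₀₂)` be the generators
with `λ = 0`. The products `x x* y y* = (E₀₀, E₁₁)(E₀₀, E₀₀) = (E₀₀, 0)` and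
`x* x y* y = (E₁₁, E₂₂)(E₂₂, E₂₂) = (0, E₂₂)` separate the two summands. Multiplying these by
`x`, `y` and their adjoints yields a full row of matrix units in each summand, and a row of
matrix units generates the full matrix algebra as a *-algebra, since `Eᵢⱼ = (Eₖᵢ)* Eₖⱼ`.
-/

/-- The generic element of the unital Jordan operator algebra
`A ⊆ M₃(ℂ) ⊕ M₃(ℂ)` of pairs `(λI + αE₁₂ + βE₁₃, λI − βE₁₃ + αE₂₃)`. -/
def stmt3elt (l a b : ℂ) : Matrix (Fin 3) (Fin 3) ℂ × Matrix (Fin 3) (Fin 3) ℂ :=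
  (l • 1 + a • Matrix.single 0 1 1 + b • Matrix.single 0 2 1,
   l • 1 - b • Matrix.single 0 2 1 + a • Matrix.single 1 2 1)

open Matrix

namespace Matrix

variable {R n : Type*} [CommSemiring R] [StarRing R] [Fintype n] [DecidableEq n]

theorem single_mem_of_forall_single_row_mem {S : NonUnitalStarSubalgebra R (Matrix n n R)}
    {i₀ : n} (h : ∀ j, single i₀ j 1 ∈ S) (i j : n) : single i j 1 ∈ S := by
  simpa [star_eq_conjTranspose] using mul_mem (star_mem (h i)) (h j)

theorem eq_top_of_forall_single_row_mem {S : NonUnitalStarSubalgebra R (Matrix n n R)}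
    {i₀ : n} (h : ∀ j, single i₀ j 1 ∈ S) : S = ⊤ := by
  refine eq_top_iff.2 fun M _ => Matrix.induction_on' M (zero_mem S) (fun _ _ => add_mem)
    fun i j x => ?_
  simpa using SMulMemClass.smul_mem x (single_mem_of_forall_single_row_mem h i j)

end Matrix

namespace NonUnitalStarSubalgebra

variable {R A B : Type*} [CommSemiring R] [StarRing R]
  [NonUnitalSemiring A] [StarRing A] [Module R A] [IsScalarTower R A A] [SMulCommClass R A A]
  [StarModule R A]
  [NonUnitalSemiring B] [StarRing B] [Module R B] [IsScalarTower R B B] [SMulCommClass R B B]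
  [StarModule R B]

theorem eq_top_of_comap_inl_of_comap_inr {S : NonUnitalStarSubalgebra R (A × B)}
    (hA : S.comap (NonUnitalStarAlgHom.inl R A B) = ⊤)
    (hB : S.comap (NonUnitalStarAlgHom.inr R A B) = ⊤) : S = ⊤ := by
  refine eq_top_iff.2 fun ⟨a, b⟩ _ => ?_
  have ha : (a, (0 : B)) ∈ S := (mem_comap S _ a).1 (hA ▸ NonUnitalStarAlgebra.mem_top)
  have hb : ((0 : A), b) ∈ S := (mem_comap S _ b).1 (hB ▸ NonUnitalStarAlgebra.mem_top)
  simpa using add_mem ha hb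

end NonUnitalStarSubalgebra

theorem StarSubalgebra.toNonUnitalStarSubalgebra_eq_top {R A : Type*} [CommSemiring R]
    [StarRing R] [Semiring A] [StarRing A] [Algebra R A] [StarModule R A] {S : StarSubalgebra R A} :
    S.toNonUnitalStarSubalgebra = ⊤ ↔ S = ⊤ := by
  simp [SetLike.ext_iff]

local notation "M₃" => Matrix (Fin 3) (Fin 3) ℂ

theorem stmt3elt_zero_one_zero : stmt3elt 0 1 0 = ((single 0 1 1, single 1 2 1) : M₃ × M₃) := by
  simp [stmt3elt]

theorem stmt3elt_zero_zero_one : stmt3elt 0 0 1 = ((single 0 2 1, -single 0 2 1) : M₃ × M₃) := by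
  simp [stmt3elt]

/-- The C*-algebra (star subalgebra) generated by `A` inside `M₃(ℂ) ⊕ M₃(ℂ)`
is all of `M₃(ℂ) ⊕ M₃(ℂ)`. -/
theorem stmt3 :
    StarAlgebra.adjoin ℂ {x : Matrix (Fin 3) (Fin 3) ℂ × Matrix (Fin 3) (Fin 3) ℂ |
      ∃ l a b : ℂ, x = stmt3elt l a b} = ⊤ := by
  set T := StarAlgebra.adjoin ℂ {x : Matrix (Fin 3) (Fin 3) ℂ × Matrix (Fin 3) (Fin 3) ℂ |
      ∃ l a b : ℂ, x = stmt3elt l a b}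
  have hx : ((single 0 1 1, single 1 2 1) : M₃ × M₃) ∈ T :=
    stmt3elt_zero_one_zero ▸ StarAlgebra.subset_adjoin ℂ _ ⟨0, 1, 0, rfl⟩
  have hy : ((single 0 2 1, -single 0 2 1) : M₃ × M₃) ∈ T :=
    stmt3elt_zero_zero_one ▸ StarAlgebra.subset_adjoin ℂ _ ⟨0, 0, 1, rfl⟩
  have he : ((single 0 0 1, 0) : M₃ × M₃) ∈ T := by
    simpa [Prod.star_def, star_eq_conjTranspose] using
      mul_mem (mul_mem hx (star_mem hx)) (mul_mem hy (star_mem hy))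
  have hf : ((0, single 2 2 1) : M₃ × M₃) ∈ T := by
    simpa [Prod.star_def, star_eq_conjTranspose] using
      mul_mem (mul_mem (star_mem hx) hx) (mul_mem (star_mem hy) hy)
  rw [← StarSubalgebra.toNonUnitalStarSubalgebra_eq_top]
  refine NonUnitalStarSubalgebra.eq_top_of_comap_inl_of_comap_inr
    (eq_top_of_forall_single_row_mem (i₀ := 0) fun j => ?_)
    (eq_top_of_forall_single_row_mem (i₀ := 2) fun j => ?_)
  · fin_cases j
    · exact he
    · simpa using mul_mem he hx
    · simpa using mul_mem he hy
  · fin_cases j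
    · simpa [Prod.star_def, star_eq_conjTranspose] using neg_mem (mul_mem hf (star_mem hy))
    · simpa [Prod.star_def, star_eq_conjTranspose] using mul_mem hf (star_mem hx)
    · exact hf
end

section
/- Let A be a Jordan operator algebra and x ∈ A real positive (x + x* ≥ 0). If there exists y ∈ A with xyx = x, then xAx = {xax : a ∈ A} is norm-closed. Conversely, if xAx is norm-closed, then there exists y ∈ A with xyx = x. -/
/-!
For the forward direction, `xy` and `yx` are idempotents and `xAx` is exactly the set of `z ∈ A`
with `(xy) z (yx) = z`, an intersection of two closed sets.

Conversely, it suffices to approximate `x` by elements of `xAx`. For `t > 0` let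
`r = (-t - x)⁻¹`; accretivity gives `‖r‖ ≤ 1/t`, and `x - x (x r²) x = -t (xr - (xr)²)` with
`xr = -t r - 1`, so `‖x - x (x r²) x‖ ≤ 6t`. It remains to see that `x r² ∈ A`. Since `A` is
closed under `a ↦ a b a`, it contains all powers `xⁿ` (`n ≥ 1`), hence `x s ∈ A` for every `s` in
the closed unital algebra `S` generated by `x`. The open left half-plane is connected, unbounded
and misses the spectrum of `x` in `B(H)`, so it also misses the spectrum of `x` in `S`; thus
`r ∈ S`.
-/

namespace Submodule

variable {𝕜 R : Type*} [Field 𝕜] [Ring R] [Algebra 𝕜 R]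
  (A : Submodule 𝕜 R) (hsq : ∀ a ∈ A, a * a ∈ A)
include hsq

theorem mul_add_mul_mem_of_sq_mem {a b : R} (ha : a ∈ A) (hb : b ∈ A) : a * b + b * a ∈ A := by
  have h : a * b + b * a = (a + b) * (a + b) - a * a - b * b := by noncomm_ring
  rw [h]
  exact A.sub_mem (A.sub_mem (hsq _ (A.add_mem ha hb)) (hsq a ha)) (hsq b hb)

theorem mul_mul_mem_of_sq_mem [CharZero 𝕜] {a b : R} (ha : a ∈ A) (hb : b ∈ A) :
    a * b * a ∈ A := by
  have h : a * b * a = (2 : 𝕜)⁻¹ •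
      ((a * (a * b + b * a) + (a * b + b * a) * a) - (a * a * b + b * (a * a))) := by
    rw [eq_inv_smul_iff₀ (two_ne_zero : (2 : 𝕜) ≠ 0), two_smul]
    noncomm_ring
  rw [h]
  refine A.smul_mem _ (A.sub_mem ?_ ?_)
  · exact A.mul_add_mul_mem_of_sq_mem hsq ha (A.mul_add_mul_mem_of_sq_mem hsq ha hb)
  · exact A.mul_add_mul_mem_of_sq_mem hsq (hsq a ha) hb

theorem pow_succ_mem_of_sq_mem [CharZero 𝕜] {x : R} (hx : x ∈ A) (n : ℕ) : x ^ (n + 1) ∈ A := by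
  induction n using Nat.twoStepInduction with
  | zero => simpa using hx
  | one => simpa [sq] using hsq x hx
  | more n ih _ =>
    have h := A.mul_mul_mem_of_sq_mem hsq hx ih
    rwa [← pow_succ', ← pow_succ] at h

theorem mul_mem_of_mem_adjoin [CharZero 𝕜] {x : R} (hx : x ∈ A) {s : R}
    (hs : s ∈ Algebra.adjoin 𝕜 {x}) : x * s ∈ A := by
  obtain ⟨p, rfl⟩ := Algebra.adjoin_singleton_eq_range_aeval 𝕜 x ▸ hs
  rw [AlgHom.toRingHom_eq_coe, RingHom.coe_coe, Polynomial.aeval_eq_sum_range, Finset.mul_sum]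
  refine A.sum_mem fun i _ => ?_
  rw [mul_smul_comm, ← pow_succ']
  exact A.smul_mem _ (A.pow_succ_mem_of_sq_mem hsq hx i)

theorem mul_mem_of_mem_topologicalClosure_adjoin [CharZero 𝕜] [TopologicalSpace R]
    [IsTopologicalRing R] (hA : IsClosed (A : Set R)) {x : R} (hx : x ∈ A) {s : R}
    (hs : s ∈ (Algebra.adjoin 𝕜 {x}).topologicalClosure) : x * s ∈ A := by
  have hclosed : IsClosed ((x * ·) ⁻¹' (A : Set R)) := hA.preimage (continuous_const_mul x)
  exact closure_minimal (fun s hs => A.mul_mem_of_mem_adjoin hsq hx hs) hclosed hs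

theorem setOf_eq_mul_mul_eq_inter [CharZero 𝕜] {x y : R} (hx : x ∈ A) (hy : y ∈ A)
    (hxyx : x * y * x = x) :
    {z | ∃ a ∈ A, z = x * a * x} = (A : Set R) ∩ {z | x * y * z * (y * x) = z} := by
  ext z
  constructor
  · rintro ⟨a, ha, rfl⟩
    refine ⟨A.mul_mul_mem_of_sq_mem hsq hx ha, ?_⟩
    calc x * y * (x * a * x) * (y * x) = (x * y * x) * a * (x * y * x) := by noncomm_ring
      _ = x * a * x := by rw [hxyx]
  · rintro ⟨hz, hfix⟩
    exact ⟨y * z * y, A.mul_mul_mem_of_sq_mem hsq hy hz,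
      hfix.symm.trans (by simp only [mul_assoc])⟩

end Submodule

theorem Subalgebra.disjoint_spectrum_of_isPreconnected_of_not_isBounded {𝕜 A : Type*}
    [NormedField 𝕜] [NormedRing A] [CompleteSpace A] [NormedAlgebra 𝕜 A]
    (S : Subalgebra 𝕜 A) [IsClosed (S : Set A)] (x : S) {C : Set 𝕜}
    (hC : IsPreconnected C) (hCb : ¬ Bornology.IsBounded C)
    (hCx : Disjoint C (spectrum 𝕜 (x : A))) : Disjoint C (spectrum 𝕜 x) := by
  refine Set.disjoint_left.2 fun z hzC hzσ => hCb ?_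
  exact (Subalgebra.spectrum_isBounded_connectedComponentIn S x hzσ).subset
    (hC.subset_connectedComponentIn hzC hCx.subset_compl_right)

theorem Complex.not_isBounded_setOf_re_lt_zero : ¬ Bornology.IsBounded {z : ℂ | z.re < 0} := by
  intro h
  obtain ⟨r, hr⟩ := h.subset_closedBall 0
  have hz : (-(|r| + 1 : ℝ) : ℂ) ∈ {z : ℂ | z.re < 0} := by
    simp only [Set.mem_ofPred_eq, neg_re, ofReal_re]; linarith [abs_nonneg r]
  have := hr hz
  simp only [Metric.mem_closedBall, dist_zero_right, norm_neg, norm_real, Real.norm_eq_abs] at this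
  rw [abs_of_pos (by positivity)] at this
  linarith [le_abs_self r]

namespace ContinuousLinearMap

section Accretive

open RCLike InnerProductSpace

variable {𝕜 E : Type*} [RCLike 𝕜] [NormedAddCommGroup E] [InnerProductSpace 𝕜 E]

-- Equivalent to the paper's "real positive": `x + x* ≥ 0`.
def IsAccretive (x : E →L[𝕜] E) : Prop := ∀ v, 0 ≤ re ⟪x v, v⟫_𝕜

variable {x : E →L[𝕜] E}

theorem isAccretive_of_isPositive_add_star [CompleteSpace E] (h : (x + star x).IsPositive) :
    x.IsAccretive := by
  intro v
  have h2 := h.re_inner_nonneg_left v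
  rw [add_apply, inner_add_left, map_add, star_eq_adjoint, adjoint_inner_left,
    inner_re_symm (𝕜 := 𝕜) v] at h2
  linarith

theorem IsAccretive.neg_re_mul_sq_le (hx : x.IsAccretive) (z : 𝕜) (v : E) :
    -re z * ‖v‖ ^ 2 ≤ re ⟪(x - algebraMap 𝕜 (E →L[𝕜] E) z) v, v⟫_𝕜 := by
  rw [Algebra.algebraMap_eq_smul_one, sub_apply, inner_sub_left, map_sub, smul_apply,
    one_apply_eq_self, inner_smul_left, inner_self_eq_norm_sq_to_K, ← ofReal_pow,
    re_mul_ofReal, conj_re]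
  linarith [hx v]

theorem IsAccretive.neg_re_mul_norm_le (hx : x.IsAccretive) (z : 𝕜) (v : E) :
    -re z * ‖v‖ ≤ ‖(algebraMap 𝕜 (E →L[𝕜] E) z - x) v‖ := by
  rcases (norm_nonneg v).eq_or_lt with hv | hv
  · rw [← hv, mul_zero]
    exact norm_nonneg _
  refine le_of_mul_le_mul_right ?_ hv
  calc -re z * ‖v‖ * ‖v‖ = -re z * ‖v‖ ^ 2 := by ring
    _ ≤ re ⟪(x - algebraMap 𝕜 (E →L[𝕜] E) z) v, v⟫_𝕜 := hx.neg_re_mul_sq_le z v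
    _ ≤ ‖(x - algebraMap 𝕜 (E →L[𝕜] E) z) v‖ * ‖v‖ :=
      (re_le_norm _).trans (norm_inner_le_norm _ _)
    _ = ‖(algebraMap 𝕜 (E →L[𝕜] E) z - x) v‖ * ‖v‖ := by rw [← neg_sub, neg_apply, norm_neg]

theorem IsAccretive.isUnit_algebraMap_sub [CompleteSpace E] (hx : x.IsAccretive) {z : 𝕜}
    (hz : re z < 0) : IsUnit (algebraMap 𝕜 (E →L[𝕜] E) z - x) := by
  rw [← IsUnit.neg_iff, neg_sub]
  refine isUnit_of_forall_le_norm_inner_map _ (c := (⟨-re z, by linarith⟩ : NNReal))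
    (NNReal.coe_pos.1 (neg_pos.2 hz)) fun v => ?_
  rw [mul_comm]
  exact (hx.neg_re_mul_sq_le z v).trans (re_le_norm _)

theorem IsAccretive.spectrum_subset [CompleteSpace E] (hx : x.IsAccretive) :
    spectrum 𝕜 x ⊆ {z | 0 ≤ re z} := fun z hz => by
  by_contra h
  exact hz (hx.isUnit_algebraMap_sub (not_le.1 h))

theorem IsAccretive.norm_inv_le (hx : x.IsAccretive) {z : 𝕜} (hz : re z < 0)
    (u : (E →L[𝕜] E)ˣ) (hu : (u : E →L[𝕜] E) = algebraMap 𝕜 _ z - x) :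
    ‖(↑u⁻¹ : E →L[𝕜] E)‖ ≤ (-re z)⁻¹ := by
  refine opNorm_le_bound _ (inv_nonneg.2 (neg_nonneg.2 hz.le)) fun w => ?_
  have h := hx.neg_re_mul_norm_le z ((↑u⁻¹ : E →L[𝕜] E) w)
  rw [← hu, ← mul_apply_eq_comp, Units.mul_inv, one_apply_eq_self] at h
  rw [inv_mul_eq_div, le_div_iff₀ (neg_pos.2 hz), mul_comm]
  exact h

end Accretive

end ContinuousLinearMap

section Resolvent

variable {𝕜 R : Type*} [CommRing 𝕜] [Ring R] [Algebra 𝕜 R] {x : R} {z : 𝕜} {u : Rˣ}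

theorem mul_inv_eq_smul_inv_sub_one (hu : (u : R) = algebraMap 𝕜 R z - x) :
    x * ↑u⁻¹ = z • ↑u⁻¹ - 1 := by
  have h := u.mul_inv
  rw [hu, sub_mul, ← Algebra.smul_def] at h
  rw [← h]
  abel

theorem sub_mul_mul_inv_mul_inv_mul_eq (hu : (u : R) = algebraMap 𝕜 R z - x) :
    x - x * (x * ↑u⁻¹ * ↑u⁻¹) * x = z • (x * ↑u⁻¹ - (x * ↑u⁻¹) ^ 2) := by
  set r : R := ↑u⁻¹
  have hcomm : Commute r x :=
    (hu ▸ (Algebra.commute_algebraMap_left z x).sub_left (Commute.refl x) : Commute (u : R) x)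
      |>.units_inv_left
  have hzr : z • r = x * r + 1 := by rw [mul_inv_eq_smul_inv_sub_one hu, sub_add_cancel]
  calc x - x * (x * r * r) * x = x - x * (x * r * (x * r)) := by
        rw [mul_assoc x (x * r * r) x, mul_assoc (x * r) r x, hcomm.eq]
    _ = x * (z • r) - x * (z • r) * (x * r) := by rw [hzr]; noncomm_ring
    _ = z • (x * r - (x * r) ^ 2) := by
        rw [mul_smul_comm, smul_mul_assoc, smul_sub, sq, ← mul_assoc]

end Resolvent

theorem ContinuousLinearMap.norm_sub_mul_mul_inv_mul_inv_mul_le {𝕜 E : Type*}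
    [NontriviallyNormedField 𝕜] [NormedAddCommGroup E] [NormedSpace 𝕜 E] {x : E →L[𝕜] E}
    {z : 𝕜} {u : (E →L[𝕜] E)ˣ} (hu : (u : E →L[𝕜] E) = algebraMap 𝕜 _ z - x)
    (hzu : ‖z‖ * ‖(↑u⁻¹ : E →L[𝕜] E)‖ ≤ 1) :
    ‖x - x * (x * ↑u⁻¹ * ↑u⁻¹) * x‖ ≤ 6 * ‖z‖ := by
  have hxr : ‖x * ↑u⁻¹‖ ≤ 2 := by
    rw [mul_inv_eq_smul_inv_sub_one hu]
    calc _ ≤ ‖z • (↑u⁻¹ : E →L[𝕜] E)‖ + ‖(1 : E →L[𝕜] E)‖ := norm_sub_le _ _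
      _ ≤ 1 + 1 := by rw [norm_smul]; exact add_le_add hzu ContinuousLinearMap.norm_id_le
      _ = 2 := by norm_num
  rw [sub_mul_mul_inv_mul_inv_mul_eq hu, norm_smul, mul_comm 6]
  gcongr
  calc _ ≤ ‖x * ↑u⁻¹‖ + ‖x * ↑u⁻¹‖ * ‖x * ↑u⁻¹‖ :=
        (norm_sub_le _ _).trans (by rw [sq]; gcongr; exact norm_mul_le _ _)
    _ ≤ 2 + 2 * 2 := by gcongr
    _ = 6 := by norm_num

section

variable {H : Type*} [NormedAddCommGroup H] [InnerProductSpace ℂ H] [CompleteSpace H]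
  {A : Submodule ℂ (H →L[ℂ] H)} {x : H →L[ℂ] H}

theorem Submodule.exists_mem_norm_sub_mul_mul_le (hA : IsClosed (A : Set (H →L[ℂ] H)))
    (hsq : ∀ a ∈ A, a * a ∈ A) (hx : x ∈ A) (hacc : x.IsAccretive) {t : ℝ} (ht : 0 < t) :
    ∃ a ∈ A, ‖x - x * a * x‖ ≤ 6 * t := by
  set S := (Algebra.adjoin ℂ {x}).topologicalClosure
  have : IsClosed (S : Set (H →L[ℂ] H)) := (Algebra.adjoin ℂ {x}).isClosed_topologicalClosure
  set x' : S :=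
    ⟨x, (Algebra.adjoin ℂ {x}).le_topologicalClosure (Algebra.self_mem_adjoin_singleton ℂ x)⟩
  have hleft : Disjoint {z : ℂ | z.re < 0} (spectrum ℂ x') :=
    S.disjoint_spectrum_of_isPreconnected_of_not_isBounded x'
      (convex_halfSpace_re_lt 0).isPreconnected Complex.not_isBounded_setOf_re_lt_zero
      (Set.disjoint_left.2 fun z hz hzσ => not_le.2 hz (by simpa using hacc.spectrum_subset hzσ))
  have hz : (-t : ℂ) ∉ spectrum ℂ x' := Set.disjoint_left.1 hleft (by simpa using ht)
  obtain ⟨u, hu⟩ := spectrum.notMem_iff.1 hz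
  set U := Units.map (S.val : S →* (H →L[ℂ] H)) u
  have hU : (U : H →L[ℂ] H) = algebraMap ℂ _ (-t) - x := by simp [U, hu, x']
  have hUS : (↑U⁻¹ : H →L[ℂ] H) ∈ S := by simp [U]
  have hnorm : ‖(-t : ℂ)‖ = t := by simp [ht.le]
  have hinv : ‖(-t : ℂ)‖ * ‖(↑U⁻¹ : H →L[ℂ] H)‖ ≤ 1 := by
    calc _ ≤ t * t⁻¹ := by
          rw [hnorm]; gcongr; simpa using hacc.norm_inv_le (z := -t) (by simpa using ht) U hU
      _ = 1 := mul_inv_cancel₀ ht.ne'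
  refine ⟨x * ↑U⁻¹ * ↑U⁻¹, ?_, ?_⟩
  · rw [mul_assoc]
    exact A.mul_mem_of_mem_topologicalClosure_adjoin hsq hA hx (S.mul_mem hUS hUS)
  · simpa only [hnorm] using ContinuousLinearMap.norm_sub_mul_mul_inv_mul_inv_mul_le hU hinv

theorem Submodule.mem_closure_setOf_eq_mul_mul (hA : IsClosed (A : Set (H →L[ℂ] H)))
    (hsq : ∀ a ∈ A, a * a ∈ A) (hx : x ∈ A) (hacc : x.IsAccretive) :
    x ∈ closure {z | ∃ a ∈ A, z = x * a * x} := by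
  refine Metric.mem_closure_iff.2 fun ε hε => ?_
  obtain ⟨a, ha, hdist⟩ :=
    exists_mem_norm_sub_mul_mul_le hA hsq hx hacc (t := ε / 7) (by positivity)
  exact ⟨x * a * x, ⟨a, ha, rfl⟩, by rw [dist_eq_norm]; linarith⟩

end

/-- For a real positive element `x` of a Jordan operator algebra `A`, there is
`y ∈ A` with `xyx = x` if and only if `xAx` is norm closed. -/
theorem stmt9 {H : Type*} [NormedAddCommGroup H] [InnerProductSpace ℂ H] [CompleteSpace H]
    (A : Submodule ℂ (H →L[ℂ] H)) (hA : IsClosed (A : Set (H →L[ℂ] H)))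
    (hsq : ∀ a ∈ A, a * a ∈ A)
    (x : H →L[ℂ] H) (hx : x ∈ A) (hpos : (x + star x).IsPositive) :
    (∃ y ∈ A, x * y * x = x) ↔ IsClosed {z : H →L[ℂ] H | ∃ a ∈ A, z = x * a * x} := by
  constructor
  · rintro ⟨y, hy, hxyx⟩
    rw [A.setOf_eq_mul_mul_eq_inter hsq hx hy hxyx]
    exact hA.inter (isClosed_eq (by fun_prop) continuous_id)
  · intro hclosed
    obtain ⟨a, ha, hxa⟩ := hclosed.closure_eq ▸ A.mem_closure_setOf_eq_mul_mul hA hsq hx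
      (ContinuousLinearMap.isAccretive_of_isPositive_add_star hpos)
    exact ⟨a, ha, hxa.symm⟩
end

section
/- Suppose A and B are closed Jordan subalgebras of unital Jordan operator algebras C and D respectively, with 1_C ∉ A and 1_D ∉ B, and q : A → B is a Jordan homomorphism which is a 1-quotient map (inducing an isometry A/ker(q) → B) such that ker(q) is approximately unital. Then the unique unital linear extension θ : A + ℂ1_C → B + ℂ1_D of q is a 1-quotient map. -/
/-!
The proof rests on the Möbius maps `φ_ν(x) = (ν - x)(1 - ν̄x)⁻¹` of the unit ball of `B(H)`:
each maps the closed (open) unit ball into itself and is an involution. Writing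
`φ_ν(x) = ν + (|ν|² - 1) x (1 - ν̄x)⁻¹` and expanding the inverse as a power series in `x`
without constant term shows that `φ_ν` maps `A` into `ν + A` and commutes with the Jordan
homomorphism `q`; the expansion of `φ_ν` around `ν` shows moreover `φ_ν(a + ν) ∈ A`.
Since `1 ∉ A`, `‖a + ν‖ < 1` forces `|ν| < 1`.

If `‖c + ν‖ < 1` with `c ∈ A`, then `m = φ_ν(c + ν) ∈ A` has norm `≤ 1` and
`q c + ν = φ_ν(q m)`, whence `‖q c + ν‖ ≤ 1`: the unital extension is contractive.
Conversely, if `‖q a + ν‖ < 1`, lift `φ_ν(q a + ν) ∈ B` to some `c ∈ A` of norm `< 1`;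
then `φ_ν(c) ∈ ν + A` has norm `≤ 1` and differs from `a + ν` by an element of `ker q`.
Rescaling, these two facts say that the unital extension is a 1-quotient map.
-/

open scoped ComplexConjugate Ring
open Filter Metric Topology

namespace JordanOperatorAlgebra

theorem exists_eq_add_smul_of_mem_sup_span_singleton {R M : Type*} [Semiring R]
    [AddCommMonoid M] [Module R M] {S : Submodule R M} {e z : M} (hz : z ∈ S ⊔ R ∙ e) :
    ∃ a ∈ S, ∃ μ : R, z = a + μ • e := by
  obtain ⟨a, ha, s, hs, rfl⟩ := Submodule.mem_sup.1 hz
  obtain ⟨μ, rfl⟩ := Submodule.mem_span_singleton.1 hs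
  exact ⟨a, ha, μ, rfl⟩

section Jordan

variable {X Y : Type*} [Ring X] [Algebra ℂ X] [Ring Y] [Algebra ℂ Y]
  {S : Submodule ℂ X} {T : Submodule ℂ Y}

theorem mul_eq_inv_two_smul_add_of_commute {a b : X} (h : Commute a b) :
    a * b = (2⁻¹ : ℂ) • (a * b + b * a) := by
  rw [h.eq, ← two_smul ℂ, smul_smul, inv_mul_cancel₀ two_ne_zero, one_smul]

theorem mul_add_mul_mem (hsq : ∀ a ∈ S, a * a ∈ S) {a b : X} (ha : a ∈ S) (hb : b ∈ S) :
    a * b + b * a ∈ S := by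
  have h : a * b + b * a = (a + b) * (a + b) - a * a - b * b := by noncomm_ring
  rw [h]
  exact S.sub_mem (S.sub_mem (hsq _ (S.add_mem ha hb)) (hsq a ha)) (hsq b hb)

theorem mul_mem_of_commute (hsq : ∀ a ∈ S, a * a ∈ S) {a b : X} (ha : a ∈ S) (hb : b ∈ S)
    (hab : Commute a b) : a * b ∈ S := by
  rw [mul_eq_inv_two_smul_add_of_commute hab]
  exact S.smul_mem _ (mul_add_mul_mem hsq ha hb)

theorem pow_succ_mem (hsq : ∀ a ∈ S, a * a ∈ S) {a : X} (ha : a ∈ S) (n : ℕ) :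
    a ^ (n + 1) ∈ S := by
  induction n with
  | zero => simpa using ha
  | succ n ih => exact pow_succ' a (n + 1) ▸ mul_mem_of_commute hsq ha ih (.pow_right rfl _)

theorem add_smul_one_pow_sub_mem (hsq : ∀ a ∈ S, a * a ∈ S) {a : X} (ha : a ∈ S) (ν : ℂ)
    (n : ℕ) : (a + ν • 1) ^ n - ν ^ n • (1 : X) ∈ S := by
  induction n with
  | zero => simp
  | succ n ih =>
    have hcomm : Commute a ((a + ν • 1) ^ n - ν ^ n • (1 : X)) :=
      (((Commute.refl a).add_right (.smul_right (.one_right a) ν)).pow_right n).sub_right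
        (.smul_right (.one_right a) _)
    have h : (a + ν • 1) ^ (n + 1) - ν ^ (n + 1) • (1 : X)
        = a * ((a + ν • 1) ^ n - ν ^ n • 1) + ν • ((a + ν • 1) ^ n - ν ^ n • 1) + ν ^ n • a := by
      rw [pow_succ', add_mul, smul_mul_assoc, one_mul, mul_sub, mul_smul_comm, mul_one, pow_succ']
      module
    rw [h]
    exact S.add_mem (S.add_mem (mul_mem_of_commute hsq ha ih hcomm) (S.smul_mem ν ih))
      (S.smul_mem _ ha)

variable {G : Type*} [FunLike G S T] [LinearMapClass G ℂ S T]

theorem map_mul_add_mul (hsq : ∀ a ∈ S, a * a ∈ S) {q : G}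
    (hq : ∀ a : S, (q ⟨a * a, hsq _ a.2⟩ : Y) = q a * q a) (a b : S) (h : (a : X) * b + b * a ∈ S) :
    (q ⟨a * b + b * a, h⟩ : Y) = q a * q b + q b * q a := by
  have hsplit : (⟨(a + b : S) * (a + b : S), hsq _ (a + b).2⟩ : S)
      = ⟨a * a, hsq _ a.2⟩ + ⟨a * b + b * a, h⟩ + ⟨b * b, hsq _ b.2⟩ :=
    Subtype.ext (by simp only [Submodule.coe_add]; noncomm_ring)
  have key := hq (a + b)
  rw [hsplit, map_add, map_add, map_add] at key
  simp only [Submodule.coe_add, hq] at key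
  have e : ((q a : Y) + q b) * (q a + q b) = q a * q a + (q a * q b + q b * q a) + q b * q b := by
    noncomm_ring
  rw [e] at key
  exact add_left_cancel (add_right_cancel key)

theorem map_pow_succ (hsq : ∀ a ∈ S, a * a ∈ S) {q : G}
    (hq : ∀ a : S, (q ⟨a * a, hsq _ a.2⟩ : Y) = q a * q a) (a : S) (n : ℕ) :
    (q ⟨a ^ (n + 1), pow_succ_mem hsq a.2 n⟩ : Y) = (q a : Y) ^ (n + 1) := by
  induction n with
  | zero => simp
  | succ n ih =>
    have hcomm : Commute (a : X) (a ^ (n + 1)) := .pow_right rfl _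
    have h : (⟨a ^ (n + 2), pow_succ_mem hsq a.2 (n + 1)⟩ : S) = (2⁻¹ : ℂ) •
        ⟨a * a ^ (n + 1) + a ^ (n + 1) * a, mul_add_mul_mem hsq a.2 (pow_succ_mem hsq a.2 n)⟩ :=
      Subtype.ext (by
        rw [Submodule.coe_smul, ← mul_eq_inv_two_smul_add_of_commute hcomm]
        exact pow_succ' (a : X) (n + 1))
    rw [h, map_smul, Submodule.coe_smul,
      map_mul_add_mul hsq hq a ⟨_, pow_succ_mem hsq a.2 n⟩, ih,
      ← mul_eq_inv_two_smul_add_of_commute (.pow_right rfl _)]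
    exact (pow_succ' _ _).symm

end Jordan

section Normed

variable {X : Type*} [NormedRing X] [NormedAlgebra ℂ X] {S : Submodule ℂ X}

theorem norm_le_norm_add_smul_one (hS : IsClosed (S : Set X)) (hsq : ∀ a ∈ S, a * a ∈ S)
    (h1 : (1 : X) ∉ S) {a : X} (ha : a ∈ S) (ν : ℂ) : ‖ν‖ ≤ ‖a + ν • (1 : X)‖ := by
  by_contra! hlt
  have hν : ν ≠ 0 := by
    rintro rfl
    exact (norm_nonneg _).not_gt (by simpa using hlt)
  set x : X := ν⁻¹ • a + (1 : ℂ) • 1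
  have hx : ‖x‖ < 1 := by
    have : x = ν⁻¹ • (a + ν • 1) := by
      rw [smul_add, smul_smul, inv_mul_cancel₀ hν]
    rw [this, norm_smul, norm_inv, inv_mul_lt_one₀ (norm_pos_iff.2 hν)]
    exact hlt
  have hlim : Tendsto (fun n => x ^ n - (1 : ℂ) ^ n • (1 : X)) atTop (𝓝 (0 - 1)) := by
    simpa using (tendsto_pow_atTop_nhds_zero_of_norm_lt_one hx).sub_const (1 : X)
  have hmem := hS.mem_of_tendsto hlim
    (.of_forall (add_smul_one_pow_sub_mem hsq (S.smul_mem _ ha) 1))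
  exact h1 (by simpa using S.neg_mem hmem)

theorem norm_conj_smul_lt_one {l : ℂ} (hl : ‖l‖ < 1) {x : X} (hx : ‖x‖ ≤ 1) :
    ‖conj l • x‖ < 1 := by
  rw [norm_smul, RCLike.norm_conj]
  exact mul_lt_one_of_nonneg_of_lt_one_left (norm_nonneg l) hl hx

end Normed

section Mobius

variable {X : Type*} [Ring X] [Algebra ℂ X]

noncomputable def mobius (l : ℂ) (x : X) : X := (l • 1 - x) * (1 - conj l • x)⁻¹ʳ

theorem mobius_eq_smul_one_add {l : ℂ} {x : X} (hx : IsUnit (1 - conj l • x)) :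
    mobius l x = l • 1 + (l * conj l - 1) • (x * (1 - conj l • x)⁻¹ʳ) := by
  have h : l • (1 : X) - x = l • 1 * (1 - conj l • x) + (l * conj l - 1) • x := by
    simp only [smul_mul_assoc, one_mul]
    module
  rw [mobius, h, add_mul, Ring.mul_inverse_cancel_right _ _ hx, smul_mul_assoc]

theorem mobius_mobius {l : ℂ} (hl : ‖l‖ ≠ 1) {x : X} (hx : IsUnit (1 - conj l • x)) :
    mobius l (mobius l x) = x := by
  set u := 1 - conj l • x
  set y := mobius l x
  have hδ : 1 - l * conj l ≠ 0 := by
    rw [Complex.mul_conj', sub_ne_zero, ne_comm, ← Complex.ofReal_pow]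
    exact Complex.ofReal_ne_one.2 ((pow_eq_one_iff_of_nonneg (norm_nonneg l) two_ne_zero).not.2 hl)
  have hcomm : Commute (l • (1 : X) - x) u :=
    .sub_left (.smul_left (.one_left _) l) (.sub_right (.one_right x) (.smul_right (.refl x) _))
  have hyu : y * u = l • 1 - x := Ring.inverse_mul_cancel_right _ _ hx
  have huy : u * y = l • 1 - x := by
    rw [show y = (l • 1 - x) * u⁻¹ʳ from rfl, ← mul_assoc, ← hcomm.eq, mul_assoc,
      Ring.mul_inverse_cancel _ hx, mul_one]
  have h1 : (1 - conj l • y) * u = (1 - l * conj l) • 1 := by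
    rw [sub_mul, one_mul, smul_mul_assoc, hyu]
    module
  have h2 : u * (1 - conj l • y) = (1 - l * conj l) • 1 := by
    rw [mul_sub, mul_one, mul_smul_comm, huy]
    module
  have h3 : (l • 1 - y) * u = (1 - l * conj l) • x := by
    rw [sub_mul, smul_mul_assoc, one_mul, hyu]
    module
  have hinv : (1 - conj l • y)⁻¹ʳ = (1 - l * conj l)⁻¹ • u :=
    Ring.inverse_unit (⟨1 - conj l • y, (1 - l * conj l)⁻¹ • u,
      by rw [mul_smul_comm, h1, smul_smul, inv_mul_cancel₀ hδ, one_smul],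
      by rw [smul_mul_assoc, h2, smul_smul, inv_mul_cancel₀ hδ, one_smul]⟩ : Xˣ)
  rw [mobius, hinv, mul_smul_comm, h3, smul_smul, inv_mul_cancel₀ hδ, one_smul]

end Mobius

section Series

variable {X Y : Type*} [NormedRing X] [NormedAlgebra ℂ X] [CompleteSpace X]
  [NormedRing Y] [NormedAlgebra ℂ Y] [CompleteSpace Y] {S : Submodule ℂ X} {T : Submodule ℂ Y}

theorem hasSum_mul_inverse_one_sub_smul {l : ℂ} {x : X} (hx : ‖conj l • x‖ < 1) :
    HasSum (fun n : ℕ => conj l ^ n • x ^ (n + 1)) (x * (1 - conj l • x)⁻¹ʳ) := by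
  have h := (hasSum_geom_series_inverse _ hx).mul_left x
  simp only [smul_pow, mul_smul_comm, ← pow_succ'] at h
  exact h

theorem mul_inverse_one_sub_smul_mem (hS : IsClosed (S : Set X)) (hsq : ∀ a ∈ S, a * a ∈ S)
    {l : ℂ} {c : X} (hc : c ∈ S) (hlc : ‖conj l • c‖ < 1) : c * (1 - conj l • c)⁻¹ʳ ∈ S :=
  (hasSum_mul_inverse_one_sub_smul hlc).tsum_eq ▸
    tsum_mem hS fun n => S.smul_mem _ (pow_succ_mem hsq hc n)

theorem mobius_self_add_smul_one_mem (hS : IsClosed (S : Set X)) (hsq : ∀ a ∈ S, a * a ∈ S)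
    {c : X} (hc : c ∈ S) {ν : ℂ} (hν : ‖ν‖ < 1) (hνx : ‖conj ν • (c + ν • 1)‖ < 1) :
    mobius ν (c + ν • 1) ∈ S := by
  set x := c + ν • (1 : X)
  set s : ℂ := ν * (1 - conj ν • ν)⁻¹ʳ
  have hνν : ‖conj ν • ν‖ < 1 := norm_conj_smul_lt_one hν hν.le
  have hsub : HasSum (fun n : ℕ => conj ν ^ n • (x ^ (n + 1) - ν ^ (n + 1) • 1))
      (x * (1 - conj ν • x)⁻¹ʳ - s • 1) := by
    have h := (hasSum_mul_inverse_one_sub_smul hνx).sub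
      ((hasSum_mul_inverse_one_sub_smul hνν).smul_const (1 : X))
    simp only [smul_assoc, ← smul_sub] at h
    exact h
  have hmem : x * (1 - conj ν • x)⁻¹ʳ - s • 1 ∈ S :=
    hsub.tsum_eq ▸ tsum_mem hS fun n => S.smul_mem _ (add_smul_one_pow_sub_mem hsq hc ν _)
  -- the scalar parts cancel because `φ_ν(ν) = 0`
  have hscalar : ν + (ν * conj ν - 1) * s = 0 := by
    have h := mobius_eq_smul_one_add (isUnit_one_sub_of_norm_lt_one hνν)
    rw [mobius, smul_eq_mul, mul_one, sub_self, zero_mul] at h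
    simpa [s] using h.symm
  have h : mobius ν x = (ν * conj ν - 1) • (x * (1 - conj ν • x)⁻¹ʳ - s • 1)
      + (ν + (ν * conj ν - 1) * s) • 1 := by
    rw [mobius_eq_smul_one_add (isUnit_one_sub_of_norm_lt_one hνx)]
    module
  rw [h, hscalar, zero_smul, add_zero]
  exact S.smul_mem _ hmem

theorem map_mul_inverse_one_sub_smul (hS : IsClosed (S : Set X)) (hsq : ∀ a ∈ S, a * a ∈ S)
    {G : Type*} [FunLike G S T] [ContinuousLinearMapClass G ℂ S T] {q : G}
    (hq : ∀ a : S, (q ⟨a * a, hsq _ a.2⟩ : Y) = q a * q a) {l : ℂ} (c : S)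
    (hlc : ‖conj l • (c : X)‖ < 1) (hlqc : ‖conj l • (q c : Y)‖ < 1) :
    (q ⟨c * (1 - conj l • (c : X))⁻¹ʳ, mul_inverse_one_sub_smul_mem hS hsq c.2 hlc⟩ : Y)
      = q c * (1 - conj l • (q c : Y))⁻¹ʳ := by
  let f : ℕ → S := fun n => conj l ^ n • ⟨c ^ (n + 1), pow_succ_mem hsq c.2 n⟩
  have hf : HasSum f ⟨_, mul_inverse_one_sub_smul_mem hS hsq c.2 hlc⟩ :=
    (Topology.IsInducing.subtypeVal.hasSum_iff (g := S.subtype) _ _).1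
      (hasSum_mul_inverse_one_sub_smul hlc)
  have hqf := (hf.map q (map_continuous q)).map T.subtype continuous_subtype_val
  refine hqf.unique ?_
  convert hasSum_mul_inverse_one_sub_smul hlqc using 1
  ext n
  simp only [Function.comp_apply, f, map_smul, Submodule.subtype_apply,
    map_pow_succ hsq hq]

end Series

section Hilbert

variable {H : Type*} [NormedAddCommGroup H] [InnerProductSpace ℂ H]

theorem norm_smul_sub_mul_le (l : ℂ) {u v : H} {R : ℝ} (hv : ‖v‖ ≤ R * ‖u‖) (hR0 : 0 ≤ R)
    (hR : R ≤ 1) (hl : ‖l‖ ≤ 1) :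
    ‖l • u - v‖ * (1 + ‖l‖ * R) ≤ (‖l‖ + R) * ‖u - conj l • v‖ := by
  set L := ‖l‖
  set a := ‖u‖
  set b := ‖v‖
  -- the two squared norms share the cross term `Re ⟪l • u, v⟫ = Re ⟪u, l̄ • v⟫`
  have hdiff : ‖u - conj l • v‖ ^ 2 - ‖l • u - v‖ ^ 2 = (1 - L ^ 2) * (a ^ 2 - b ^ 2) := by
    rw [norm_sub_sq (𝕜 := ℂ), norm_sub_sq (𝕜 := ℂ), inner_smul_left, inner_smul_right,
      norm_smul, norm_smul, RCLike.norm_conj]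
    ring
  have htri : ‖l • u - v‖ ^ 2 ≤ (L * a + b) ^ 2 :=
    pow_le_pow_left₀ (norm_nonneg _) ((norm_sub_le _ _).trans_eq (by rw [norm_smul])) 2
  have hL2 : 0 ≤ 1 - L ^ 2 := by nlinarith [norm_nonneg l]
  have hR2 : 0 ≤ 1 - R ^ 2 := by nlinarith
  have hf : 0 ≤ (L + R) ^ 2 * (a ^ 2 - b ^ 2) - (1 - R ^ 2) * (L * a + b) ^ 2 := by
    have e : (L + R) ^ 2 * (a ^ 2 - b ^ 2) - (1 - R ^ 2) * (L * a + b) ^ 2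
        = (R * a - b) * ((L + R) ^ 2 * (R * a + b) + (1 - R ^ 2) * (2 * L * a + b + R * a)) := by
      ring
    rw [e]
    exact mul_nonneg (by linarith) (by positivity)
  refine le_of_sq_le_sq ?_ (by positivity)
  rw [mul_pow, mul_pow]
  nlinarith [mul_nonneg hL2 hf, mul_nonneg (mul_nonneg hL2 hR2) (sub_nonneg.2 htri)]

variable [CompleteSpace H]

theorem norm_mobius_le {x : H →L[ℂ] H} {l : ℂ} {R : ℝ} (hx : ‖x‖ ≤ R) (hR : R ≤ 1)
    (hl : ‖l‖ < 1) : ‖mobius l x‖ ≤ (‖l‖ + R) / (1 + ‖l‖ * R) := by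
  have hR0 : 0 ≤ R := (norm_nonneg x).trans hx
  have hu : IsUnit (1 - conj l • x) :=
    isUnit_one_sub_of_norm_lt_one (norm_conj_smul_lt_one hl (hx.trans hR))
  refine ContinuousLinearMap.opNorm_le_bound _ (by positivity) fun w => ?_
  obtain ⟨u, rfl⟩ : ∃ u, (1 - conj l • x) u = w := ⟨(1 - conj l • x)⁻¹ʳ w, by
    rw [← mul_apply_eq_comp, Ring.mul_inverse_cancel _ hu, one_apply_eq_self]⟩
  have happ : mobius l x ((1 - conj l • x) u) = l • u - x u := by
    rw [mobius, mul_apply_eq_comp, ← mul_apply_eq_comp _ (1 - _),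
      Ring.inverse_mul_cancel _ hu]
    simp
  rw [happ, div_mul_eq_mul_div, le_div_iff₀ (by positivity)]
  simpa using norm_smul_sub_mul_le l ((x.le_opNorm u).trans (by gcongr)) hR0 hR hl.le

theorem norm_mobius_le_one {x : H →L[ℂ] H} {l : ℂ} (hx : ‖x‖ ≤ 1) (hl : ‖l‖ < 1) :
    ‖mobius l x‖ ≤ 1 :=
  (norm_mobius_le hx le_rfl hl).trans_eq (by rw [mul_one, add_comm, div_self (by positivity)])

theorem norm_mobius_lt_one {x : H →L[ℂ] H} {l : ℂ} (hx : ‖x‖ < 1) (hl : ‖l‖ < 1) :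
    ‖mobius l x‖ < 1 :=
  (norm_mobius_le le_rfl hx.le hl).trans_lt <| by
    rw [div_lt_one (by positivity)]
    nlinarith [norm_nonneg l, norm_nonneg x]

end Hilbert

section QuotientMap

theorem norm_map_le_of_norm_eq_infDist {E F G : Type*} [SeminormedAddCommGroup E]
    [SeminormedAddCommGroup F] [FunLike G E F] [AddMonoidHomClass G E F] {f : G}
    (hf : ∀ a, ‖f a‖ = infDist a {k | f k = 0}) (a : E) : ‖f a‖ ≤ ‖a‖ :=
  (hf a).trans_le ((infDist_le_dist_of_mem (s := {k | f k = 0}) (map_zero f)).trans_eq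
    (dist_zero_right a))

theorem exists_map_eq_norm_lt_of_norm_eq_infDist {E F G : Type*} [SeminormedAddCommGroup E]
    [SeminormedAddCommGroup F] [FunLike G E F] [AddMonoidHomClass G E F] {f : G}
    (hsurj : Function.Surjective f) (hf : ∀ a, ‖f a‖ = infDist a {k | f k = 0}) {b : F} {r : ℝ}
    (hb : ‖b‖ < r) : ∃ a, f a = b ∧ ‖a‖ < r := by
  obtain ⟨a, rfl⟩ := hsurj b
  rw [hf a, infDist_lt_iff (s := {k | f k = 0}) ⟨0, map_zero f⟩] at hb
  obtain ⟨k, hk : f k = 0, hak⟩ := hb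
  exact ⟨a - k, by rw [map_sub, hk, sub_zero], by rwa [← dist_eq_norm]⟩

theorem norm_eq_infDist_of_unitBall {𝕜 E F G : Type*} [RCLike 𝕜] [NormedAddCommGroup E]
    [NormedSpace 𝕜 E] [NormedAddCommGroup F] [NormedSpace 𝕜 F] [FunLike G E F]
    [LinearMapClass G 𝕜 E F] {f : G} (hle : ∀ z, ‖z‖ < 1 → ‖f z‖ ≤ 1)
    (hlift : ∀ z, ‖f z‖ < 1 → ∃ k, f k = 0 ∧ ‖z - k‖ ≤ 1) (z : E) :
    ‖f z‖ = infDist z {k | f k = 0} := by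
  have hinv : ∀ {t : ℝ}, 0 < t → ‖(t : 𝕜)⁻¹‖ = t⁻¹ := fun ht => by
    rw [norm_inv, RCLike.norm_of_nonneg ht.le]
  have hcontr : ∀ w, ‖f w‖ ≤ ‖w‖ := fun w => le_of_forall_gt_imp_ge_of_dense fun t ht => by
    have ht0 := (norm_nonneg w).trans_lt ht
    have h := hle ((t : 𝕜)⁻¹ • w) (by rwa [norm_smul, hinv ht0, inv_mul_lt_one₀ ht0])
    rwa [map_smul, norm_smul, hinv ht0, inv_mul_le_one₀ ht0] at h
  refine le_antisymm ((le_infDist (s := {k | f k = 0}) ⟨0, map_zero f⟩).2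
    fun k (hk : f k = 0) => ?_) (le_of_forall_gt_imp_ge_of_dense fun t ht => ?_)
  · rw [dist_eq_norm, ← sub_zero (f z), ← hk, ← map_sub]
    exact hcontr _
  · have ht0 := (norm_nonneg _).trans_lt ht
    obtain ⟨k, hk, hzk⟩ := hlift ((t : 𝕜)⁻¹ • z) (by
      rwa [map_smul, norm_smul, hinv ht0, inv_mul_lt_one₀ ht0])
    have hz : z - (t : 𝕜) • k = (t : 𝕜) • ((t : 𝕜)⁻¹ • z - k) := by
      rw [smul_sub, smul_smul, mul_inv_cancel₀ (by exact_mod_cast ht0.ne'), one_smul]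
    calc infDist z {k | f k = 0} ≤ dist z ((t : 𝕜) • k) :=
          infDist_le_dist_of_mem (by simp [map_smul, hk])
      _ = t * ‖(t : 𝕜)⁻¹ • z - k‖ := by
          rw [dist_eq_norm, hz, norm_smul, RCLike.norm_of_nonneg ht0.le]
      _ ≤ t := mul_le_of_le_one_right ht0.le hzk

end QuotientMap

section Unitization

variable {H K : Type*} [NormedAddCommGroup H] [InnerProductSpace ℂ H] [CompleteSpace H]
  [NormedAddCommGroup K] [InnerProductSpace ℂ K] [CompleteSpace K]
  {A : Submodule ℂ (H →L[ℂ] H)} {B : Submodule ℂ (K →L[ℂ] K)} {q : A →L[ℂ] B}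

theorem norm_map_add_smul_one_le_one (hA : IsClosed (A : Set (H →L[ℂ] H)))
    (hsqA : ∀ a ∈ A, a * a ∈ A) (h1A : (1 : H →L[ℂ] H) ∉ A)
    (hq : ∀ a : A, (q ⟨a * a, hsqA _ a.2⟩ : K →L[ℂ] K) = q a * q a) (hqc : ∀ a, ‖q a‖ ≤ ‖a‖)
    {c : A} {ν : ℂ} (hc : ‖(c : H →L[ℂ] H) + ν • 1‖ < 1) :
    ‖(q c : K →L[ℂ] K) + ν • 1‖ ≤ 1 := by
  have hν : ‖ν‖ < 1 := (norm_le_norm_add_smul_one hA hsqA h1A c.2 ν).trans_lt hc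
  have hνx := norm_conj_smul_lt_one hν hc.le
  set m : A := ⟨mobius ν ((c : H →L[ℂ] H) + ν • 1), mobius_self_add_smul_one_mem hA hsqA c.2 hν hνx⟩
  have hm : ‖(m : H →L[ℂ] H)‖ ≤ 1 := norm_mobius_le_one hc.le hν
  have hνm := norm_conj_smul_lt_one hν hm
  have hνqm := norm_conj_smul_lt_one (x := (q m : K →L[ℂ] K)) hν ((hqc m).trans hm)
  have hcm : c = (ν * conj ν - 1) • (⟨_, mul_inverse_one_sub_smul_mem hA hsqA m.2 hνm⟩ : A) := by
    have h := mobius_mobius hν.ne (isUnit_one_sub_of_norm_lt_one hνx)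
    rw [mobius_eq_smul_one_add (isUnit_one_sub_of_norm_lt_one hνm), add_comm] at h
    exact Subtype.ext (add_right_cancel h).symm
  have hqcm : (q c : K →L[ℂ] K) + ν • 1 = mobius ν (q m : K →L[ℂ] K) := by
    rw [mobius_eq_smul_one_add (isUnit_one_sub_of_norm_lt_one hνqm), hcm, map_smul,
      Submodule.coe_smul, map_mul_inverse_one_sub_smul hA hsqA hq m hνm hνqm, add_comm]
  rw [hqcm]
  exact norm_mobius_le_one ((hqc m).trans hm) hν

theorem exists_map_eq_zero_norm_add_smul_one_sub_le_one (hA : IsClosed (A : Set (H →L[ℂ] H)))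
    (hsqA : ∀ a ∈ A, a * a ∈ A) (hB : IsClosed (B : Set (K →L[ℂ] K)))
    (hsqB : ∀ b ∈ B, b * b ∈ B) (h1B : (1 : K →L[ℂ] K) ∉ B)
    (hq : ∀ a : A, (q ⟨a * a, hsqA _ a.2⟩ : K →L[ℂ] K) = q a * q a)
    (hlift : ∀ b : B, ‖b‖ < 1 → ∃ a : A, q a = b ∧ ‖a‖ < 1)
    {a : A} {ν : ℂ} (ha : ‖(q a : K →L[ℂ] K) + ν • 1‖ < 1) :
    ∃ k : A, q k = 0 ∧ ‖(a : H →L[ℂ] H) + ν • 1 - k‖ ≤ 1 := by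
  have hν : ‖ν‖ < 1 := (norm_le_norm_add_smul_one hB hsqB h1B (q a).2 ν).trans_lt ha
  have hνy := norm_conj_smul_lt_one hν ha.le
  have hm := norm_mobius_lt_one ha hν
  obtain ⟨c, hc, hc1⟩ :=
    hlift ⟨_, mobius_self_add_smul_one_mem hB hsqB (q a).2 hν hνy⟩ hm
  have hqc : (q c : K →L[ℂ] K) = mobius ν ((q a : K →L[ℂ] K) + ν • 1) := congrArg Subtype.val hc
  have hνc := norm_conj_smul_lt_one (x := (c : H →L[ℂ] H)) hν hc1.le
  have hνqc : ‖conj ν • (q c : K →L[ℂ] K)‖ < 1 := hqc ▸ norm_conj_smul_lt_one hν hm.le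
  set p : A := ⟨_, mul_inverse_one_sub_smul_mem hA hsqA c.2 hνc⟩
  have hqa : (q a : K →L[ℂ] K) = (ν * conj ν - 1) • (q p : K →L[ℂ] K) := by
    have h := mobius_mobius hν.ne (isUnit_one_sub_of_norm_lt_one hνy)
    rw [← hqc, mobius_eq_smul_one_add (isUnit_one_sub_of_norm_lt_one hνqc), add_comm] at h
    rw [map_mul_inverse_one_sub_smul hA hsqA hq c hνc hνqc]
    exact (add_right_cancel h).symm
  refine ⟨a - (ν * conj ν - 1) • p, ?_, ?_⟩
  · exact Subtype.ext (by simp [hqa])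
  · have h : (a : H →L[ℂ] H) + ν • 1 - (a - (ν * conj ν - 1) • p : A)
        = mobius ν (c : H →L[ℂ] H) := by
      rw [mobius_eq_smul_one_add (isUnit_one_sub_of_norm_lt_one hνc)]
      simp only [Submodule.coe_sub, Submodule.coe_smul, p]
      abel
    rw [h]
    exact norm_mobius_le_one hc1.le hν

end Unitization

end JordanOperatorAlgebra

open JordanOperatorAlgebra

theorem stmt16_general {H K : Type*}
    [NormedAddCommGroup H] [InnerProductSpace ℂ H] [CompleteSpace H]
    [NormedAddCommGroup K] [InnerProductSpace ℂ K] [CompleteSpace K]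
    (A : Submodule ℂ (H →L[ℂ] H)) (hA : IsClosed (A : Set (H →L[ℂ] H)))
    (hsqA : ∀ a ∈ A, a * a ∈ A) (h1A : (1 : H →L[ℂ] H) ∉ A)
    (B : Submodule ℂ (K →L[ℂ] K)) (hB : IsClosed (B : Set (K →L[ℂ] K)))
    (hsqB : ∀ b ∈ B, b * b ∈ B) (h1B : (1 : K →L[ℂ] K) ∉ B)
    (q : ↥A →L[ℂ] ↥B)
    (hqJordan : ∀ a : ↥A,
      ((q ⟨(a : H →L[ℂ] H) * (a : H →L[ℂ] H), hsqA _ a.2⟩ : ↥B) : K →L[ℂ] K)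
        = (q a : K →L[ℂ] K) * (q a : K →L[ℂ] K))
    (hqsurj : Function.Surjective q)
    (hqquot : ∀ a : ↥A, ‖q a‖ = Metric.infDist a {k : ↥A | q k = 0})
    -- the unitizations `A¹ = A + ℂ1` and `B¹ = B + ℂ1`
    (A1 : Submodule ℂ (H →L[ℂ] H)) (hA1 : A1 = A ⊔ (ℂ ∙ (1 : H →L[ℂ] H)))
    (h1A1 : (1 : H →L[ℂ] H) ∈ A1) (hleA : A ≤ A1)
    (B1 : Submodule ℂ (K →L[ℂ] K)) (hB1 : B1 = B ⊔ (ℂ ∙ (1 : K →L[ℂ] K)))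
    (h1B1 : (1 : K →L[ℂ] K) ∈ B1) (hleB : B ≤ B1)
    (θ : ↥A1 →L[ℂ] ↥B1)
    (hθ1 : θ ⟨1, h1A1⟩ = ⟨1, h1B1⟩)
    (hθq : ∀ a : ↥A, θ ⟨(a : H →L[ℂ] H), hleA a.2⟩ = ⟨((q a : ↥B) : K →L[ℂ] K), hleB (q a).2⟩) :
    Function.Surjective θ ∧
      ∀ z : ↥A1, ‖θ z‖ = Metric.infDist z {k : ↥A1 | θ k = 0} := by
  have hdecomp : ∀ z : A1, ∃ (a : A) (μ : ℂ), z = ⟨a, hleA a.2⟩ + μ • ⟨1, h1A1⟩ := fun z => by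
    obtain ⟨a, ha, μ, hz⟩ := exists_eq_add_smul_of_mem_sup_span_singleton (hA1.le z.2)
    exact ⟨⟨a, ha⟩, μ, Subtype.ext hz⟩
  have hθ : ∀ (a : A) (μ : ℂ),
      θ (⟨a, hleA a.2⟩ + μ • ⟨1, h1A1⟩) = ⟨q a, hleB (q a).2⟩ + μ • ⟨1, h1B1⟩ := fun a μ => by
    rw [map_add, map_smul, hθq, hθ1]
  refine ⟨fun w => ?_, norm_eq_infDist_of_unitBall (𝕜 := ℂ) (fun z hz => ?_) (fun z hz => ?_)⟩
  · obtain ⟨b, hb, μ, hw⟩ := exists_eq_add_smul_of_mem_sup_span_singleton (hB1.le w.2)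
    obtain ⟨a, ha⟩ := hqsurj ⟨b, hb⟩
    exact ⟨_, (hθ a μ).trans (Subtype.ext (by simp [hw, ha]))⟩
  · obtain ⟨a, μ, rfl⟩ := hdecomp z
    rw [hθ]
    exact norm_map_add_smul_one_le_one hA hsqA h1A hqJordan
      (norm_map_le_of_norm_eq_infDist hqquot) hz
  · obtain ⟨a, μ, rfl⟩ := hdecomp z
    rw [hθ] at hz
    obtain ⟨k, hk, hak⟩ := exists_map_eq_zero_norm_add_smul_one_sub_le_one hA hsqA hB hsqB h1B
      hqJordan (fun b hb => exists_map_eq_norm_lt_of_norm_eq_infDist hqsurj hqquot hb) hz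
    exact ⟨⟨k, hleA k.2⟩, by rw [hθq, hk]; rfl, hak⟩

/-- Suppose `A ⊆ B(H)` and `B ⊆ B(K)` are closed Jordan subalgebras of the unital
Jordan operator algebras `B(H)`, `B(K)` with `1 ∉ A`, `1 ∉ B`, and `q : A → B` is
a contractive-continuous Jordan homomorphism which is a 1-quotient map (i.e.
surjective, with `‖q a‖` equal to the distance from `a` to `ker q`), whose kernel
is approximately unital.  Then any unital (continuous linear) extension
`θ : A + ℂ1 → B + ℂ1` of `q` is a 1-quotient map. -/
theorem stmt16 {H K : Type*}
    [NormedAddCommGroup H] [InnerProductSpace ℂ H] [CompleteSpace H]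
    [NormedAddCommGroup K] [InnerProductSpace ℂ K] [CompleteSpace K]
    (A : Submodule ℂ (H →L[ℂ] H)) (hA : IsClosed (A : Set (H →L[ℂ] H)))
    (hsqA : ∀ a ∈ A, a * a ∈ A) (h1A : (1 : H →L[ℂ] H) ∉ A)
    (B : Submodule ℂ (K →L[ℂ] K)) (hB : IsClosed (B : Set (K →L[ℂ] K)))
    (hsqB : ∀ b ∈ B, b * b ∈ B) (h1B : (1 : K →L[ℂ] K) ∉ B)
    (q : ↥A →L[ℂ] ↥B)
    (hqJordan : ∀ a : ↥A,
      ((q ⟨(a : H →L[ℂ] H) * (a : H →L[ℂ] H), hsqA _ a.2⟩ : ↥B) : K →L[ℂ] K)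
        = (q a : K →L[ℂ] K) * (q a : K →L[ℂ] K))
    (hqsurj : Function.Surjective q)
    (hqquot : ∀ a : ↥A, ‖q a‖ = Metric.infDist a {k : ↥A | q k = 0})
    (hkercai : ∃ (ι : Type) (l : Filter ι) (e : ι → ↥A), l.NeBot ∧
      (∀ i, q (e i) = 0 ∧ ‖e i‖ ≤ 1) ∧
      ∀ a : ↥A, q a = 0 → Filter.Tendsto
        (fun i => ((1 : ℂ) / 2) •
          ((e i : H →L[ℂ] H) * a + (a : H →L[ℂ] H) * (e i : H →L[ℂ] H)))
        l (nhds (a : H →L[ℂ] H)))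
    -- the unitizations `A¹ = A + ℂ1` and `B¹ = B + ℂ1`
    (A1 : Submodule ℂ (H →L[ℂ] H)) (hA1 : A1 = A ⊔ (ℂ ∙ (1 : H →L[ℂ] H)))
    (h1A1 : (1 : H →L[ℂ] H) ∈ A1) (hleA : A ≤ A1)
    (B1 : Submodule ℂ (K →L[ℂ] K)) (hB1 : B1 = B ⊔ (ℂ ∙ (1 : K →L[ℂ] K)))
    (h1B1 : (1 : K →L[ℂ] K) ∈ B1) (hleB : B ≤ B1)
    (θ : ↥A1 →L[ℂ] ↥B1)
    (hθ1 : θ ⟨1, h1A1⟩ = ⟨1, h1B1⟩)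
    (hθq : ∀ a : ↥A, θ ⟨(a : H →L[ℂ] H), hleA a.2⟩ = ⟨((q a : ↥B) : K →L[ℂ] K), hleB (q a).2⟩) :
    Function.Surjective θ ∧
      ∀ z : ↥A1, ‖θ z‖ = Metric.infDist z {k : ↥A1 | θ k = 0} :=
  stmt16_general A hA hsqA h1A B hB hsqB h1B q hqJordan hqsurj hqquot A1 hA1 h1A1 hleA B1 hB1 h1B1
    hleB θ hθ1 hθq
end

section
/- Let E₂ ⊂ M₄(ℂ) be the Jordan operator algebra of matrices α(E₁₂+E₃₄) + β(E₁₃−E₂₄), and F₂ ⊂ M₆(ℂ) the operator algebra of matrices that are zero except for the top-right 3×3 block equal to αE₁₂' + βE₁₃' embedded appropriately (an algebra with zero associative product). Then E₂ and F₂ are completely isometrically isomorphic as Jordan operator algebras (both with zero Jordan product), via the map sending the element with parameters (α, β) in E₂ to the one with parameters (α, β) in F₂. -/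
set_option synthInstance.maxHeartbeats 1000000
set_option maxHeartbeats 1000000

open Matrix

/-- The generic element of `E₂ ⊆ M₄(ℂ)`. -/
def E2elt (α β : ℂ) : Matrix (Fin 4) (Fin 4) ℂ :=
  !![0, α, β, 0; 0, 0, 0, -β; 0, 0, 0, α; 0, 0, 0, 0]

/-- The generic element of `F₂ ⊆ M₆(ℂ)`: zero except for the top-right `3 × 3`
block, which is the corner `G` of `E₂` (first column and last row removed). -/
def F2elt (α β : ℂ) : Matrix (Fin 6) (Fin 6) ℂ :=
  !![0, 0, 0, α, β, 0;
     0, 0, 0, 0, 0, -β;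
     0, 0, 0, 0, 0, α;
     0, 0, 0, 0, 0, 0;
     0, 0, 0, 0, 0, 0;
     0, 0, 0, 0, 0, 0]

/-- The amplification of a parametrized family to `Mₙ`, as an operator on a
Euclidean space. -/
noncomputable def amplification {d : ℕ} (m : ℂ → ℂ → Matrix (Fin d) (Fin d) ℂ) {n : ℕ}
    (α β : Matrix (Fin n) (Fin n) ℂ) :
    EuclideanSpace ℂ (Fin n × Fin d) →L[ℂ] EuclideanSpace ℂ (Fin n × Fin d) :=
  Matrix.toEuclideanCLM (𝕜 := ℂ)
    (Matrix.of fun p q : Fin n × Fin d => m (α p.1 q.1) (β p.1 q.1) p.2 q.2)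

/-!
Deleting the zero first column and zero last row of `E₂(α, β)` leaves the `3 × 3` corner `G`,
which is also the only nonzero block of `F₂(α, β)`. So `E₂(α, β)` is the submatrix of `F₂(α, β)`
on rows `0, 1, 2, 3` and columns `0, 3, 4, 5`, and `F₂(α, β)` vanishes off those rows and columns;
the same holds entrywise after amplification to `Mₙ`. For the `ℓ²` operator norm, a submatrix
along injective index maps is a compression `P* B Q` by isometries, so it cannot increase the norm,
and when `B` is supported on the chosen rows and columns nothing is lost, as `B = P (P* B Q) Q*`.

The Jordan products vanish because `F₂` has zero associative product, while
`E₂(α, β) E₂(γ, δ) = (βγ - αδ) E₁₄` is antisymmetric in the two factors.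
-/

open scoped Matrix.Norms.L2Operator

namespace Matrix

variable {𝕜 : Type*} [RCLike 𝕜] {m n m' n' : Type*}

lemma l2_opNorm_one_le [Fintype n] [DecidableEq n] : ‖(1 : Matrix n n 𝕜)‖ ≤ 1 := by
  rw [← l2_opNorm_toEuclideanCLM, map_one]
  exact ContinuousLinearMap.norm_id_le

lemma conjTranspose_mul_one_submatrix [Fintype m'] [DecidableEq m] [DecidableEq m']
    {r : m → m'} (hr : r.Injective) :
    ((1 : Matrix m' m' 𝕜).submatrix id r)ᴴ * (1 : Matrix m' m' 𝕜).submatrix id r = 1 := by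
  rw [conjTranspose_submatrix, conjTranspose_one, ← submatrix_mul _ _ _ _ _ Function.bijective_id,
    Matrix.mul_one, submatrix_one _ hr]

lemma one_submatrix_mul_conjTranspose [Fintype m] [DecidableEq m'] {r : m → m'}
    (hr : r.Injective) :
    (1 : Matrix m' m' 𝕜).submatrix id r * ((1 : Matrix m' m' 𝕜).submatrix id r)ᴴ =
      diagonal fun i => if i ∈ Set.range r then 1 else 0 := by
  classical
  ext i k
  by_cases hik : i = k
  · subst hik
    by_cases hi : i ∈ Set.range r
    · obtain ⟨i, rfl⟩ := hi
      simp [mul_apply, one_apply, hr.eq_iff]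
    · simp_all [mul_apply, one_apply]
  · rw [mul_apply, diagonal_apply_ne _ hik]
    refine Finset.sum_eq_zero fun j _ => ?_
    by_cases hj : i = r j
    · simp [one_apply, hj ▸ Ne.symm hik]
    · simp [one_apply, hj]

lemma l2_opNorm_one_submatrix_le [Fintype m] [Fintype m'] [DecidableEq m] [DecidableEq m']
    {r : m → m'} (hr : r.Injective) : ‖(1 : Matrix m' m' 𝕜).submatrix id r‖ ≤ 1 := by
  have h := l2_opNorm_conjTranspose_mul_self ((1 : Matrix m' m' 𝕜).submatrix id r)
  rw [conjTranspose_mul_one_submatrix hr] at h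
  nlinarith [l2_opNorm_one_le (𝕜 := 𝕜) (n := m), norm_nonneg ((1 : Matrix m' m' 𝕜).submatrix id r)]

lemma l2_opNorm_mul_mul_le [Fintype m] [Fintype n] [Fintype m'] [Fintype n'] [DecidableEq m]
    [DecidableEq n] [DecidableEq n']
    {P : Matrix m' m 𝕜} {Q : Matrix n n' 𝕜} (hP : ‖P‖ ≤ 1) (hQ : ‖Q‖ ≤ 1) (A : Matrix m n 𝕜) :
    ‖P * A * Q‖ ≤ ‖A‖ :=
  calc ‖P * A * Q‖ ≤ ‖P‖ * ‖A‖ * ‖Q‖ := by grw [l2_opNorm_mul, l2_opNorm_mul]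
    _ ≤ 1 * ‖A‖ * 1 := by gcongr
    _ = ‖A‖ := by ring

lemma submatrix_eq_one_submatrix_mul_mul [Fintype m'] [Fintype n'] [DecidableEq m']
    [DecidableEq n'] (B : Matrix m' n' 𝕜) (r : m → m') (c : n → n') :
    B.submatrix r c =
      ((1 : Matrix m' m' 𝕜).submatrix id r)ᴴ * B * (1 : Matrix n' n' 𝕜).submatrix id c := by
  ext i j
  simp [mul_apply, one_apply]

lemma l2_opNorm_submatrix_le [Fintype m] [Fintype n] [Fintype m'] [Fintype n'] [DecidableEq m]
    [DecidableEq n] [DecidableEq m'] [DecidableEq n'] (B : Matrix m' n' 𝕜) {r : m → m'}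
    {c : n → n'} (hr : r.Injective) (hc : c.Injective) : ‖B.submatrix r c‖ ≤ ‖B‖ := by
  rw [submatrix_eq_one_submatrix_mul_mul]
  exact l2_opNorm_mul_mul_le (by rw [l2_opNorm_conjTranspose]; exact l2_opNorm_one_submatrix_le hr)
    (l2_opNorm_one_submatrix_le hc) B

lemma eq_one_submatrix_mul_submatrix_mul [Fintype m] [Fintype n] [Fintype m'] [Fintype n']
    [DecidableEq m'] [DecidableEq n'] (B : Matrix m' n' 𝕜) {r : m → m'} {c : n → n'}
    (hr : r.Injective) (hc : c.Injective)
    (hB : ∀ i j, B i j ≠ 0 → i ∈ Set.range r ∧ j ∈ Set.range c) :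
    B = (1 : Matrix m' m' 𝕜).submatrix id r * B.submatrix r c *
      ((1 : Matrix n' n' 𝕜).submatrix id c)ᴴ := by
  rw [submatrix_eq_one_submatrix_mul_mul B r c, ← Matrix.mul_assoc, ← Matrix.mul_assoc,
    one_submatrix_mul_conjTranspose hr, Matrix.mul_assoc _ _ (_ᴴ),
    one_submatrix_mul_conjTranspose hc]
  ext i j
  by_cases hij : B i j = 0
  · simp [hij]
  · obtain ⟨hi, hj⟩ := hB i j hij
    simp only [diagonal_mul, mul_diagonal, if_pos hi, if_pos hj, one_mul, mul_one]

lemma l2_opNorm_submatrix_eq [Fintype m] [Fintype n] [Fintype m'] [Fintype n'] [DecidableEq m]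
    [DecidableEq n] [DecidableEq m'] [DecidableEq n'] (B : Matrix m' n' 𝕜) {r : m → m'}
    {c : n → n'} (hr : r.Injective) (hc : c.Injective)
    (hB : ∀ i j, B i j ≠ 0 → i ∈ Set.range r ∧ j ∈ Set.range c) :
    ‖B.submatrix r c‖ = ‖B‖ := by
  refine (l2_opNorm_submatrix_le B hr hc).antisymm ?_
  conv_lhs => rw [eq_one_submatrix_mul_submatrix_mul B hr hc hB]
  exact l2_opNorm_mul_mul_le (l2_opNorm_one_submatrix_le hr)
    (by rw [l2_opNorm_conjTranspose]; exact l2_opNorm_one_submatrix_le hc) _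

end Matrix

theorem norm_amplification_eq_of_submatrix {d d' : ℕ} {m : ℂ → ℂ → Matrix (Fin d) (Fin d) ℂ}
    {m' : ℂ → ℂ → Matrix (Fin d') (Fin d') ℂ} {r c : Fin d → Fin d'} (hr : r.Injective)
    (hc : c.Injective) (hm : ∀ a b, m a b = (m' a b).submatrix r c)
    (hm' : ∀ a b i j, m' a b i j ≠ 0 → i ∈ Set.range r ∧ j ∈ Set.range c) {n : ℕ}
    (α β : Matrix (Fin n) (Fin n) ℂ) :
    ‖amplification m α β‖ = ‖amplification m' α β‖ := by
  simp only [amplification, l2_opNorm_toEuclideanCLM]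
  have hsub : Matrix.of (fun p q : Fin n × Fin d => m (α p.1 q.1) (β p.1 q.1) p.2 q.2) =
      (Matrix.of fun p q : Fin n × Fin d' => m' (α p.1 q.1) (β p.1 q.1) p.2 q.2).submatrix
        (Prod.map id r) (Prod.map id c) := by
    ext p q
    simp [hm]
  rw [hsub]
  refine l2_opNorm_submatrix_eq _ (Function.injective_id.prodMap hr)
    (Function.injective_id.prodMap hc) ?_
  rintro ⟨i, p⟩ ⟨j, q⟩ h
  obtain ⟨⟨p, rfl⟩, ⟨q, rfl⟩⟩ := hm' _ _ p q h
  exact ⟨⟨(i, p), rfl⟩, ⟨(j, q), rfl⟩⟩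

lemma E2elt_mul_E2elt (α β γ δ : ℂ) :
    E2elt α β * E2elt γ δ = single 0 3 (β * γ - α * δ) := by
  ext i j
  fin_cases i <;> fin_cases j <;> simp [E2elt, mul_apply, Fin.sum_univ_four, single]
  ring

lemma F2elt_mul_F2elt (α β γ δ : ℂ) : F2elt α β * F2elt γ δ = 0 := by
  ext i j
  fin_cases i <;> fin_cases j <;> simp [F2elt, mul_apply, Fin.sum_univ_six]

lemma E2elt_eq_submatrix_F2elt (α β : ℂ) :
    E2elt α β = (F2elt α β).submatrix (Fin.castLE (by norm_num)) ![0, 3, 4, 5] := by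
  ext i j
  fin_cases i <;> fin_cases j <;> rfl

lemma F2elt_support (α β : ℂ) (i j : Fin 6) (h : F2elt α β i j ≠ 0) :
    i ∈ Set.range (Fin.castLE (by norm_num : 4 ≤ 6)) ∧ j ∈ Set.range ![(0 : Fin 6), 3, 4, 5] := by
  fin_cases i <;> fin_cases j <;> simp [F2elt] at h ⊢

/-- `E₂` and `F₂` are completely isometrically isomorphic Jordan operator
algebras (both with identically zero Jordan product), via `(α, β) ↦ (α, β)`. -/
theorem stmt17 :
    (∀ α β γ δ : ℂ, E2elt α β * E2elt γ δ + E2elt γ δ * E2elt α β = 0) ∧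
    (∀ α β γ δ : ℂ, F2elt α β * F2elt γ δ + F2elt γ δ * F2elt α β = 0) ∧
    ∀ (n : ℕ) (α β : Matrix (Fin n) (Fin n) ℂ),
      ‖amplification E2elt α β‖ = ‖amplification F2elt α β‖ := by
  refine ⟨fun α β γ δ => ?_, fun α β γ δ => ?_, fun n α β => ?_⟩
  · rw [E2elt_mul_E2elt, E2elt_mul_E2elt, ← single_add, ← single_zero 0 3]
    ring_nf
  · rw [F2elt_mul_F2elt, F2elt_mul_F2elt, add_zero]
  · exact norm_amplification_eq_of_submatrix (Fin.castLE_injective _) (by decide)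
      E2elt_eq_submatrix_F2elt F2elt_support α β
end

section
/- Let A be a Jordan operator algebra and x ∈ A real positive such that the closed algebra joa(x) generated by x is unital with identity e. Then e x e = x, setting y to be the inverse-like element: there exists y ∈ joa(x) with xyx = x. -/
/-!
Inside the closed algebra `joa(x)`, with `e` as its unit, `x` is invertible: a character of this
commutative unital Banach algebra vanishing at `x` vanishes on the closed algebra generated by `x`,
which is everything, contradicting `φ e = 1`. The inverse `y` then satisfies `x y x = e x = x`.
-/

open NonUnitalAlgebra WeakDual

theorem isUnit_of_elemental_eq_top {B : Type*} [NormedCommRing B] [NormedAlgebra ℂ B]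
    [CompleteSpace B] {b : B} (hb : elemental ℂ b = ⊤) : IsUnit b := by
  by_contra hnu
  obtain ⟨φ, hφb⟩ := CharacterSpace.exists_apply_eq_zero hnu
  have hker : elemental ℂ b ≤ NonUnitalAlgHom.equalizer (CharacterSpace.toNonUnitalAlgHom φ) 0 :=
    elemental.le_of_mem (isClosed_eq (map_continuous φ) continuous_const) hφb
  have hφ1 : φ 1 = 0 := hker (hb ▸ NonUnitalAlgebra.mem_top : (1 : B) ∈ elemental ℂ b)
  simp at hφ1

theorem elemental_coe_eq_top {𝕜 A : Type*} [NormedField 𝕜] [NonUnitalNormedRing A]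
    [NormedSpace 𝕜 A] [IsScalarTower 𝕜 A A] [SMulCommClass 𝕜 A A] (x : A) :
    elemental 𝕜 (⟨x, elemental.self_mem 𝕜 x⟩ : elemental 𝕜 x) = ⊤ := by
  set T := elemental 𝕜 (⟨x, elemental.self_mem 𝕜 x⟩ : elemental 𝕜 x)
  have hT : IsClosed
      ((T.map (NonUnitalSubalgebraClass.subtype _) : NonUnitalSubalgebra 𝕜 A) : Set A) :=
    (elemental.isClosedEmbedding_coe 𝕜 x).isClosedMap _ (elemental.isClosed 𝕜 _)
  have hle := elemental.le_of_mem hT ⟨_, elemental.self_mem 𝕜 _, rfl⟩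
  refine NonUnitalAlgebra.eq_top_iff.mpr fun z => ?_
  obtain ⟨w, hw, hwz⟩ := hle z.2
  exact Subtype.ext hwz ▸ hw

theorem exists_mul_eq_of_identity_mem_elemental {A : Type*} [NormedRing A] [NormedAlgebra ℂ A]
    [CompleteSpace A] {x e : A} (he : e ∈ elemental ℂ x)
    (hunit : ∀ z ∈ elemental ℂ x, e * z = z ∧ z * e = z) :
    ∃ y ∈ elemental ℂ x, x * y = e := by
  let ringS : CommRing (elemental ℂ x) :=
    { (inferInstance : NonUnitalCommRing (elemental ℂ x)) with
      one := ⟨e, he⟩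
      one_mul := fun z => Subtype.ext (hunit z z.2).1
      mul_one := fun z => Subtype.ext (hunit z z.2).2 }
  let : NormedCommRing (elemental ℂ x) := { ringS, (inferInstance : NonUnitalNormedRing _) with }
  let : NormedAlgebra ℂ (elemental ℂ x) :=
    { Algebra.ofModule smul_mul_assoc mul_smul_comm with
      norm_smul_le := fun r z => norm_smul_le r (z : A) }
  obtain ⟨u, hu⟩ := isUnit_of_elemental_eq_top (elemental_coe_eq_top (𝕜 := ℂ) x)
  refine ⟨((u⁻¹ : (elemental ℂ x)ˣ) : elemental ℂ x), Subtype.property _, ?_⟩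
  have h := congrArg Subtype.val u.mul_inv
  rwa [hu] at h

theorem stmt19_general {H : Type*} [NormedAddCommGroup H] [InnerProductSpace ℂ H] [CompleteSpace H]
    (x : H →L[ℂ] H)
    (e : H →L[ℂ] H)
    (he : e ∈ closure ((NonUnitalAlgebra.adjoin ℂ {x} :
        NonUnitalSubalgebra ℂ (H →L[ℂ] H)) : Set (H →L[ℂ] H)))
    (hunit : ∀ z ∈ closure ((NonUnitalAlgebra.adjoin ℂ {x} :
        NonUnitalSubalgebra ℂ (H →L[ℂ] H)) : Set (H →L[ℂ] H)),
      e * z = z ∧ z * e = z) :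
    e * x * e = x ∧ ∃ y ∈ closure ((NonUnitalAlgebra.adjoin ℂ {x} :
        NonUnitalSubalgebra ℂ (H →L[ℂ] H)) : Set (H →L[ℂ] H)), x * y * x = x := by
  obtain ⟨hex, hxe⟩ := hunit x (elemental.self_mem ℂ x)
  obtain ⟨y, hy, hxy⟩ := exists_mul_eq_of_identity_mem_elemental he hunit
  exact ⟨by rw [hex, hxe], y, hy, by rw [hxy, hex]⟩

/-- If `x` is a real positive element of a Jordan operator algebra `A` such that
the closed algebra `joa(x)` generated by `x` is unital with identity `e`, then
`e x e = x` and there exists `y ∈ joa(x)` with `x y x = x`. -/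
theorem stmt19 {H : Type*} [NormedAddCommGroup H] [InnerProductSpace ℂ H] [CompleteSpace H]
    (A : Submodule ℂ (H →L[ℂ] H)) (hA : IsClosed (A : Set (H →L[ℂ] H)))
    (hsq : ∀ a ∈ A, a * a ∈ A)
    (x : H →L[ℂ] H) (hx : x ∈ A) (hpos : (x + star x).IsPositive)
    (e : H →L[ℂ] H)
    (he : e ∈ closure ((NonUnitalAlgebra.adjoin ℂ {x} :
        NonUnitalSubalgebra ℂ (H →L[ℂ] H)) : Set (H →L[ℂ] H)))
    (hunit : ∀ z ∈ closure ((NonUnitalAlgebra.adjoin ℂ {x} :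
        NonUnitalSubalgebra ℂ (H →L[ℂ] H)) : Set (H →L[ℂ] H)),
      e * z = z ∧ z * e = z) :
    e * x * e = x ∧ ∃ y ∈ closure ((NonUnitalAlgebra.adjoin ℂ {x} :
        NonUnitalSubalgebra ℂ (H →L[ℂ] H)) : Set (H →L[ℂ] H)), x * y * x = x :=
  stmt19_general x e he hunit
end
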